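/- Let M : ℝ → Matrix(2,2,ℝ) be a word matrix family. Suppose there are ε > 0 and functions λu, λs : ℝ → ℝ and Pu, Ps : ℝ → Matrix(2,2,ℝ), all real-analytic on the interval I = (1−ε, 1+ε), such that for all c ∈ I: M(c) = λu(c)·Pu(c) + λs(c)·Ps(c), Pu(c) + Ps(c) = 1, Pu(c)·Pu(c) = Pu(c), Ps(c)·Ps(c) = Ps(c), Pu(c)·Ps(c) = 0, and |λs(c)| < 1 < |λu(c)|; suppose moreover λu′(1) ≠ 0. Then for any two nonzero V, W ∈ ℝ[X]², the real-analytic function c ↦ (Pu(c)·V(c)) ∧ W(c) is not identically zero on I: there exists c ∈ I with (Pu(c)·V(c)) ∧ W(c) ≠ 0. -/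

import Mathlib

open Polynomial Matrix

/-- The generator `A(c) = [[-1,0],[0,1]]`. -/
def Amat (_c : ℝ) : Matrix (Fin 2) (Fin 2) ℝ := !![-1, 0; 0, 1]

/-- The generator `B(c) = [[-1,2],[0,1]]`. -/
def Bmat (_c : ℝ) : Matrix (Fin 2) (Fin 2) ℝ := !![-1, 2; 0, 1]

/-- The generator `C(c) = [[-c,c-1],[-c-1,c]]`. -/
def Cmat (c : ℝ) : Matrix (Fin 2) (Fin 2) ℝ := !![-c, c - 1; -c - 1, c]

/-- The generator `J = [[-1,0],[0,-1]]`. -/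
def Jmat (_c : ℝ) : Matrix (Fin 2) (Fin 2) ℝ := !![-1, 0; 0, -1]

/-- A word matrix family: a product of a fixed finite word in the generators `A`, `B`, `C`, `J`. -/
def IsWordFamily (M : ℝ → Matrix (Fin 2) (Fin 2) ℝ) : Prop :=
  ∃ L : List (ℝ → Matrix (Fin 2) (Fin 2) ℝ),
    (∀ g ∈ L, g = Amat ∨ g = Bmat ∨ g = Cmat ∨ g = Jmat) ∧
    ∀ c, M c = (L.map (fun g => g c)).prod

/-- The wedge product of two vectors in `ℝ²`: `u ∧ w = u₁w₂ − u₂w₁`. -/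
def wedge2 (u w : Fin 2 → ℝ) : ℝ := u 0 * w 1 - u 1 * w 0

/-- Evaluation of a pair of polynomials at a real number, giving a vector in `ℝ²`. -/
noncomputable def evalVec (p : Polynomial ℝ × Polynomial ℝ) (c : ℝ) : Fin 2 → ℝ :=
  ![p.1.eval c, p.2.eval c]

/-!
Suppose `(Pu V) ∧ W` vanishes on `I`. The word family is a polynomial matrix `N` with constant
determinant `D = ±1`, and `λu`, `λs` are roots of the characteristic polynomial
`x² - T(c) x + D`, `T = tr N` (neither projection vanishes, since `|λs| < 1 < |λu|`).
Expanding `M V = λu Pu V + λs (V - Pu V)` gives `(M V) ∧ W = λs (V ∧ W)`. So either `λs` is a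
ratio `p / q` of polynomials on `I`, or (when `V ∧ W ≡ 0`) `V(c)` is an eigenvector of `M(c)` and
an eigenvalue is such a ratio. A rational function that is a root of the monic polynomial
`x² - T x + D` with `D` a unit must be a unit polynomial, which forces `T` to be constant.
Then `λu` is a continuous function with values in the finite root set of one fixed polynomial,
hence locally constant at `1`, contradicting `λu'(1) ≠ 0`.
-/

open Topology

theorem Polynomial.natDegree_eq_zero_of_quadratic {K : Type*} [Field K] {T D p q : K[X]}
    (hD : IsUnit D) (hq : q ≠ 0) (h : p ^ 2 - T * p * q + D * q ^ 2 = 0) : T.natDegree = 0 := by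
  classical
  -- In lowest terms `a / b`, `b ∣ a²` and `a ∣ D b²` force `a` and `b` to be units.
  obtain ⟨a, b, hpa, hqb, hab⟩ := extract_gcd p q
  have hg : gcd p q ≠ 0 := gcd_ne_zero_of_right hq
  generalize gcd p q = g at hpa hqb hg
  subst hpa hqb
  have hab : IsRelPrime a b := gcd_isUnit_iff_isRelPrime.mp hab
  have hab₀ : a ^ 2 - T * a * b + D * b ^ 2 = 0 := by
    have : g ^ 2 * (a ^ 2 - T * a * b + D * b ^ 2) = 0 := by linear_combination h
    exact (mul_eq_zero.mp this).resolve_left (pow_ne_zero 2 hg)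
  have hb : IsUnit b := by
    refine hab (hab.symm.dvd_of_dvd_mul_right ⟨T * a - D * b, ?_⟩) dvd_rfl
    linear_combination hab₀
  have ha : IsUnit a := by
    refine isUnit_of_dvd_unit ((hab.mul_right hab).dvd_of_dvd_mul_right ⟨T * b - a, ?_⟩) hD
    linear_combination hab₀
  obtain ⟨α, hα, rfl⟩ := Polynomial.isUnit_iff.mp ha
  obtain ⟨β, hβ, rfl⟩ := Polynomial.isUnit_iff.mp hb
  obtain ⟨δ, -, rfl⟩ := Polynomial.isUnit_iff.mp hD
  have hT : T * C (α * β) = C (α ^ 2 + δ * β ^ 2) := by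
    simp only [C_mul, C_add, C_pow]; linear_combination -hab₀
  rw [← natDegree_mul_C (mul_ne_zero hα.ne_zero hβ.ne_zero), hT, natDegree_C]

theorem ContinuousAt.eventuallyEq_of_eventually_mem_finite {X Y : Type*} [TopologicalSpace X]
    [TopologicalSpace Y] [T1Space Y] {f : X → Y} {x : X} (hf : ContinuousAt f x) {s : Set Y}
    (hs : s.Finite) (h : ∀ᶠ y in 𝓝 x, f y ∈ s) : f =ᶠ[𝓝 x] fun _ => f x := by
  have hnhds : (s \ {f x})ᶜ ∈ 𝓝 (f x) :=
    ((hs.subset Set.sdiff_subset).isClosed.isOpen_compl).mem_nhds (by simp)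
  filter_upwards [h, hf hnhds] with y hy hy'
  simpa [hy] using hy'

theorem deriv_eq_zero_of_eventually_isRoot {f : ℝ → ℝ} {x : ℝ} {p : ℝ[X]} (hf : ContinuousAt f x)
    (hp : p ≠ 0) (h : ∀ᶠ y in 𝓝 x, p.IsRoot (f y)) : deriv f x = 0 := by
  rw [(hf.eventuallyEq_of_eventually_mem_finite (finite_setOfPred_isRoot hp) h).deriv_eq,
    deriv_const]

section Spectral

variable {K n : Type*} [Field K] [Fintype n] [DecidableEq n]

theorem Matrix.isRoot_charpoly_of_mulVec_eq_smul {M : Matrix n n K} {v : n → K} {μ : K}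
    (hv : v ≠ 0) (h : M *ᵥ v = μ • v) : M.charpoly.IsRoot μ := by
  rw [IsRoot, eval_charpoly, ← exists_mulVec_eq_zero_iff]
  refine ⟨v, hv, ?_⟩
  ext i
  simp [sub_mulVec, h]

theorem Matrix.isRoot_charpoly_of_mul_eq_smul {M P : Matrix n n K} {μ : K} (hP : P ≠ 0)
    (h : M * P = μ • P) : M.charpoly.IsRoot μ := by
  obtain ⟨j, hj⟩ : ∃ j, P.col j ≠ 0 := by
    contrapose! hP
    ext i j
    exact congrFun (hP j) i
  refine isRoot_charpoly_of_mulVec_eq_smul hj ?_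
  rw [← mulVec_single_one, mulVec_mulVec, h, smul_mulVec]

theorem Matrix.isRoot_charpoly_of_eq_smul_add_smul {M P Q : Matrix n n K} {a b : K}
    (hM : M = a • P + b • Q) (hPQ : P + Q = 1) (hP : P * P = P) (hP₀ : P ≠ 0) :
    M.charpoly.IsRoot a := by
  refine isRoot_charpoly_of_mul_eq_smul hP₀ ?_
  obtain rfl : Q = 1 - P := eq_sub_of_add_eq' hPQ
  rw [hM, add_mul, smul_mul, smul_mul, hP, sub_mul, one_mul, hP, sub_self, smul_zero, add_zero]

end Spectral

theorem Matrix.ne_zero_of_eq_smul_add_smul {M P Q : Matrix (Fin 2) (Fin 2) ℝ} {a b : ℝ}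
    (hM : M = a • P + b • Q) (hPQ : P + Q = 1) (hdet : M.det ^ 2 = 1) (hb : |b| ≠ 1) : P ≠ 0 := by
  rintro rfl
  rw [zero_add] at hPQ
  rw [hM, hPQ, smul_zero, zero_add, det_smul, det_one, Fintype.card_fin, mul_one, ← pow_mul]
    at hdet
  have habs := congrArg abs hdet
  rw [abs_pow, abs_one, pow_eq_one_iff_of_nonneg (abs_nonneg b) (by norm_num)] at habs
  exact hb habs

theorem exists_eq_smul_of_wedge2_eq_zero {u v : Fin 2 → ℝ} (hv : v ≠ 0) (h : wedge2 u v = 0) :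
    ∃ μ : ℝ, u = μ • v := by
  obtain ⟨i, hi⟩ := Function.ne_iff.mp hv
  refine ⟨u i / v i, funext fun j => ?_⟩
  simp only [wedge2] at h
  simp only [Pi.smul_apply, smul_eq_mul, Pi.zero_apply] at hi ⊢
  field_simp
  fin_cases i <;> fin_cases j <;> simp <;> linarith

theorem wedge2_mulVec_of_eq_smul_add_smul {M P Q : Matrix (Fin 2) (Fin 2) ℝ} {a b : ℝ}
    {v w : Fin 2 → ℝ} (hM : M = a • P + b • Q) (hPQ : P + Q = 1) (h : wedge2 (P *ᵥ v) w = 0) :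
    wedge2 (M *ᵥ v) w = b * wedge2 v w := by
  have hMv : M *ᵥ v = a • (P *ᵥ v) + b • (v - P *ᵥ v) := by
    rw [hM, eq_sub_of_add_eq' hPQ, add_mulVec, smul_mulVec, smul_mulVec, sub_mulVec, one_mulVec]
  simp only [hMv, wedge2, Pi.add_apply, Pi.sub_apply, Pi.smul_apply, smul_eq_mul] at h ⊢
  linear_combination (a - b) * h

section Evaluation

variable {R n : Type*} [CommRing R] [Fintype n]

theorem Matrix.trace_map_eval (N : Matrix n n R[X]) (c : R) :
    (N.map (eval c)).trace = N.trace.eval c :=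
  (AddMonoidHom.map_trace (evalRingHom c) N).symm

theorem Matrix.det_map_eval [DecidableEq n] (N : Matrix n n R[X]) (c : R) :
    (N.map (eval c)).det = N.det.eval c :=
  (RingHom.map_det (evalRingHom c) N).symm

theorem Matrix.mulVec_map_eval (N : Matrix n n R[X]) (v : n → R[X]) (c : R) :
    N.map (eval c) *ᵥ (eval c ∘ v) = eval c ∘ (N *ᵥ v) :=
  funext fun i => (RingHom.map_mulVec (evalRingHom c) N v i).symm

end Evaluation

theorem wedge2_comp_eval (u w : Fin 2 → ℝ[X]) (c : ℝ) :
    wedge2 (eval c ∘ u) (eval c ∘ w) = (u 0 * w 1 - u 1 * w 0).eval c := by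
  simp [wedge2]

theorem Matrix.natDegree_trace_eq_zero_of_isRoot {K : Type*} [Field K]
    {N : Matrix (Fin 2) (Fin 2) K[X]} (hN : IsUnit N.det) {p q : K[X]} (hq : q ≠ 0) {S : Set K}
    (hS : S.Infinite)
    (h : ∀ c ∈ S, ∃ μ, (N.map (eval c)).charpoly.IsRoot μ ∧ p.eval c = μ * q.eval c) :
    N.trace.natDegree = 0 := by
  refine natDegree_eq_zero_of_quadratic (p := p) hN hq
    (eq_zero_of_infinite_isRoot _ (hS.mono fun c hc => ?_))
  obtain ⟨μ, hμ, hpq⟩ := h c hc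
  rw [charpoly_fin_two, trace_map_eval, det_map_eval] at hμ
  simp only [Set.mem_ofPred_eq, IsRoot, eval_add, eval_sub, eval_mul, eval_pow, eval_C, eval_X]
    at hμ ⊢
  linear_combination (p.eval c + μ * q.eval c - N.trace.eval c * q.eval c) * hpq
    + q.eval c ^ 2 * hμ

theorem Matrix.natDegree_trace_eq_zero_of_wedge2_mulVec {N : Matrix (Fin 2) (Fin 2) ℝ[X]}
    (hN : IsUnit N.det) {v w : Fin 2 → ℝ[X]} (hv : v ≠ 0) (hw : w ≠ 0) {S : Set ℝ}
    (hS : S.Infinite) {b : ℝ → ℝ} (hb : ∀ c ∈ S, (N.map (eval c)).charpoly.IsRoot (b c))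
    (h : ∀ c ∈ S, wedge2 (N.map (eval c) *ᵥ (eval c ∘ v)) (eval c ∘ w)
      = b c * wedge2 (eval c ∘ v) (eval c ∘ w)) :
    N.trace.natDegree = 0 := by
  simp only [mulVec_map_eval, wedge2_comp_eval] at h
  by_cases hvw : v 0 * w 1 - v 1 * w 0 = 0
  · -- `v(c)` is then an eigenvector of `N(c)` wherever `v(c)` and `w(c)` are nonzero.
    obtain ⟨i, hi⟩ := Function.ne_iff.mp hv
    obtain ⟨j, hj⟩ := Function.ne_iff.mp hw
    refine natDegree_trace_eq_zero_of_isRoot (p := (N *ᵥ v) i) hN hi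
      (hS.sdiff (finite_setOfPred_isRoot (mul_ne_zero hi hj))) fun c ⟨hc, hcij⟩ => ?_
    simp only [Set.mem_ofPred_eq, IsRoot, eval_mul, mul_eq_zero, not_or] at hcij
    have hvc : eval c ∘ v ≠ 0 := Function.ne_iff.mpr ⟨i, hcij.1⟩
    have hwc : eval c ∘ w ≠ 0 := Function.ne_iff.mpr ⟨j, hcij.2⟩
    obtain ⟨α, hα⟩ := exists_eq_smul_of_wedge2_eq_zero hwc
      (by rw [wedge2_comp_eval, h c hc, hvw, eval_zero, mul_zero])
    obtain ⟨β, hβ⟩ := exists_eq_smul_of_wedge2_eq_zero hwc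
      (by rw [wedge2_comp_eval, hvw, eval_zero])
    have hβ₀ : β ≠ 0 := by
      rintro rfl
      exact hvc (hβ.trans (zero_smul ℝ _))
    have hMv : N.map (eval c) *ᵥ (eval c ∘ v) = (α / β) • (eval c ∘ v) := by
      rw [mulVec_map_eval, hα, hβ, smul_smul, div_mul_cancel₀ _ hβ₀]
    refine ⟨α / β, isRoot_charpoly_of_mulVec_eq_smul hvc hMv, ?_⟩
    simpa [mulVec_map_eval] using congrFun hMv i
  · exact natDegree_trace_eq_zero_of_isRoot hN hvw hS fun c hc => ⟨b c, hb c hc, h c hc⟩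

theorem Matrix.charpoly_map_eval_eq {K : Type*} [Field K] {N : Matrix (Fin 2) (Fin 2) K[X]}
    (hT : N.trace.natDegree = 0) (hD : N.det.natDegree = 0) (c d : K) :
    (N.map (eval c)).charpoly = (N.map (eval d)).charpoly := by
  rw [charpoly_fin_two, charpoly_fin_two, trace_map_eval, trace_map_eval, det_map_eval,
    det_map_eval, eq_C_of_natDegree_eq_zero hT, eq_C_of_natDegree_eq_zero hD]
  simp only [eval_C]

theorem IsWordFamily.exists_polynomial_matrix {M : ℝ → Matrix (Fin 2) (Fin 2) ℝ}
    (hM : IsWordFamily M) :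
    ∃ N : Matrix (Fin 2) (Fin 2) ℝ[X], (∀ c, M c = N.map (eval c)) ∧ N.det ^ 2 = 1 := by
  obtain ⟨L, hL, hML⟩ := hM
  have hlift : ∀ g ∈ L, ∃ N : Matrix (Fin 2) (Fin 2) ℝ[X],
      (∀ c, g c = N.map (eval c)) ∧ N.det ^ 2 = 1 := by
    intro g hg
    rcases hL g hg with rfl | rfl | rfl | rfl
    · exact ⟨!![-1, 0; 0, 1], fun c => by ext i j; fin_cases i <;> fin_cases j <;> simp [Amat],
        by rw [det_fin_two_of]; ring⟩
    · exact ⟨!![-1, 2; 0, 1], fun c => by ext i j; fin_cases i <;> fin_cases j <;> simp [Bmat],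
        by rw [det_fin_two_of]; ring⟩
    · exact ⟨!![-X, X - 1; -X - 1, X],
        fun c => by ext i j; fin_cases i <;> fin_cases j <;> simp [Cmat],
        by rw [det_fin_two_of]; ring⟩
    · exact ⟨!![-1, 0; 0, -1], fun c => by ext i j; fin_cases i <;> fin_cases j <;> simp [Jmat],
        by rw [det_fin_two_of]; ring⟩
  choose! lift hlift_eval hlift_det using hlift
  refine ⟨(L.map lift).prod, fun c => ?_, ?_⟩
  · have hmap : L.map (fun g => g c) = (L.map lift).map (evalRingHom c).mapMatrix := by
      rw [List.map_map]
      exact List.map_congr_left fun g hg => hlift_eval g hg c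
    rw [hML c, hmap, ← map_list_prod]
    rfl
  · refine List.prod_induction (fun A : Matrix (Fin 2) (Fin 2) ℝ[X] => A.det ^ 2 = 1)
      (fun A B hA hB => ?_) (by simp) ?_
    · rw [det_mul, mul_pow, hA, hB, one_mul]
    · simpa using hlift_det

theorem evalVec_eq_comp (V : ℝ[X] × ℝ[X]) (c : ℝ) : evalVec V c = eval c ∘ ![V.1, V.2] := by
  funext i
  fin_cases i <;> rfl

theorem stmt14_general (M : ℝ → Matrix (Fin 2) (Fin 2) ℝ) (hM : IsWordFamily M)
    (ε : ℝ) (hε : 0 < ε)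
    (lamu lams : ℝ → ℝ) (Pu Ps : ℝ → Matrix (Fin 2) (Fin 2) ℝ)
    (hlamu : AnalyticOnNhd ℝ lamu (Set.Ioo (1 - ε) (1 + ε)))
    (hdiag : ∀ c ∈ Set.Ioo (1 - ε) (1 + ε),
      M c = lamu c • Pu c + lams c • Ps c ∧
      Pu c + Ps c = 1 ∧ Pu c * Pu c = Pu c ∧ Ps c * Ps c = Ps c ∧ Pu c * Ps c = 0 ∧
      |lams c| < 1 ∧ 1 < |lamu c|)
    (hderiv : deriv lamu 1 ≠ 0)
    (V W : Polynomial ℝ × Polynomial ℝ) (hV : V ≠ 0) (hW : W ≠ 0) :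
    ∃ c ∈ Set.Ioo (1 - ε) (1 + ε),
      wedge2 (Pu c *ᵥ evalVec V c) (evalVec W c) ≠ 0 := by
  by_contra! hcon
  obtain ⟨N, hMN, hN⟩ := hM.exists_polynomial_matrix
  have hNunit : IsUnit N.det := IsUnit.of_pow_eq_one hN two_ne_zero
  have hroots : ∀ c ∈ Set.Ioo (1 - ε) (1 + ε),
      (M c).charpoly.IsRoot (lamu c) ∧ (M c).charpoly.IsRoot (lams c) := by
    intro c hc
    obtain ⟨hMc, hPQ, hPP, hQQ, -, hs, hu⟩ := hdiag c hc
    have hdet : (M c).det ^ 2 = 1 := by rw [hMN, det_map_eval, ← eval_pow, hN, eval_one]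
    have hMc' : M c = lams c • Ps c + lamu c • Pu c := hMc.trans (add_comm _ _)
    have hQP : Ps c + Pu c = 1 := (add_comm _ _).trans hPQ
    exact ⟨isRoot_charpoly_of_eq_smul_add_smul hMc hPQ hPP
        (ne_zero_of_eq_smul_add_smul hMc hPQ hdet hs.ne),
      isRoot_charpoly_of_eq_smul_add_smul hMc' hQP hQQ
        (ne_zero_of_eq_smul_add_smul hMc' hQP hdet hu.ne')⟩
  have hT : N.trace.natDegree = 0 := by
    refine natDegree_trace_eq_zero_of_wedge2_mulVec hNunit (v := ![V.1, V.2])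
      (w := ![W.1, W.2]) (fun h => hV (Prod.ext (congrFun h 0) (congrFun h 1)))
      (fun h => hW (Prod.ext (congrFun h 0) (congrFun h 1)))
      (Set.Ioo_infinite (by linarith)) (fun c hc => hMN c ▸ (hroots c hc).2) fun c hc => ?_
    rw [← evalVec_eq_comp, ← evalVec_eq_comp, ← hMN]
    exact wedge2_mulVec_of_eq_smul_add_smul (hdiag c hc).1 (hdiag c hc).2.1 (hcon c hc)
  have hconst : ∀ c, (M c).charpoly = (M 1).charpoly := fun c => by
    rw [hMN, hMN]
    exact charpoly_map_eval_eq hT (natDegree_eq_zero_of_isUnit hNunit) c 1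
  have h1 : (1 : ℝ) ∈ Set.Ioo (1 - ε) (1 + ε) := ⟨by linarith, by linarith⟩
  refine hderiv (deriv_eq_zero_of_eventually_isRoot (hlamu 1 h1).continuousAt
    (M 1).charpoly_monic.ne_zero ?_)
  filter_upwards [isOpen_Ioo.mem_nhds h1] with c hc
  exact hconst c ▸ (hroots c hc).1

theorem stmt14 (M : ℝ → Matrix (Fin 2) (Fin 2) ℝ) (hM : IsWordFamily M)
    (ε : ℝ) (hε : 0 < ε)
    (lamu lams : ℝ → ℝ) (Pu Ps : ℝ → Matrix (Fin 2) (Fin 2) ℝ)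
    (hlamu : AnalyticOnNhd ℝ lamu (Set.Ioo (1 - ε) (1 + ε)))
    (hlams : AnalyticOnNhd ℝ lams (Set.Ioo (1 - ε) (1 + ε)))
    (hPu : ∀ i j : Fin 2, AnalyticOnNhd ℝ (fun c => Pu c i j) (Set.Ioo (1 - ε) (1 + ε)))
    (hPs : ∀ i j : Fin 2, AnalyticOnNhd ℝ (fun c => Ps c i j) (Set.Ioo (1 - ε) (1 + ε)))
    (hdiag : ∀ c ∈ Set.Ioo (1 - ε) (1 + ε),
      M c = lamu c • Pu c + lams c • Ps c ∧
      Pu c + Ps c = 1 ∧ Pu c * Pu c = Pu c ∧ Ps c * Ps c = Ps c ∧ Pu c * Ps c = 0 ∧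
      |lams c| < 1 ∧ 1 < |lamu c|)
    (hderiv : deriv lamu 1 ≠ 0)
    (V W : Polynomial ℝ × Polynomial ℝ) (hV : V ≠ 0) (hW : W ≠ 0) :
    ∃ c ∈ Set.Ioo (1 - ε) (1 + ε),
      wedge2 (Pu c *ᵥ evalVec V c) (evalVec W c) ≠ 0 :=
  stmt14_general M hM ε hε lamu lams Pu Ps hlamu hdiag hderiv V W hV hW
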